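/- If all covariance matrices are equal (Σ_i = Σ for all i), then every critical point of the normal mixture g lies in the convex hull of the component means μ_1, ..., μ_K. -/

import Mathlib

/-!
Since `∇φ(x; μ, Σ) = -φ(x; μ, Σ) Σ⁻¹ (x - μ)`, the gradient of `g` is `-Σ⁻¹ ∑ⱼ aⱼ (x - μⱼ)` with
weights `aⱼ = πⱼ φ(x; μⱼ, Σ) > 0`. As `Σ⁻¹` is positive definite, hence nondegenerate, a critical
point satisfies `∑ⱼ aⱼ (x - μⱼ) = 0`: it is the `a`-weighted barycenter of the means.
-/

open Matrix

noncomputable def gauss (D : ℕ) (μ : Fin D → ℝ) (S : Matrix (Fin D) (Fin D) ℝ)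
    (x : Fin D → ℝ) : ℝ :=
  (Real.sqrt ((2 * Real.pi) ^ D * S.det))⁻¹ *
    Real.exp (-((x - μ) ⬝ᵥ (S⁻¹ *ᵥ (x - μ))) / 2)

theorem Finset.mem_convexHull_of_sum_smul_sub_eq_zero {ι 𝕜 E : Type*} [Field 𝕜] [LinearOrder 𝕜]
    [IsStrictOrderedRing 𝕜] [AddCommGroup E] [Module 𝕜 E] {s : Finset ι} {a : ι → 𝕜}
    {z : ι → E} {x : E} (ha : ∀ i ∈ s, 0 ≤ a i) (hs : 0 < ∑ i ∈ s, a i)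
    (h : ∑ i ∈ s, a i • (x - z i) = 0) :
    x ∈ convexHull 𝕜 (z '' s) := by
  have hx : x = s.centerMass a z := by
    rw [Finset.sum_congr rfl fun i _ => smul_sub (a i) x (z i), Finset.sum_sub_distrib,
      ← Finset.sum_smul, sub_eq_zero] at h
    rw [Finset.centerMass, ← h, smul_smul, inv_mul_cancel₀ hs.ne', one_smul]
  exact hx ▸ s.centerMass_mem_convexHull ha hs fun i hi => Set.mem_image_of_mem z hi

namespace Matrix

variable {n : Type*} [Fintype n]

theorem IsSymm.dotProduct_mulVec_comm {A : Matrix n n ℝ} (hA : A.IsSymm) (u v : n → ℝ) :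
    v ⬝ᵥ A *ᵥ u = u ⬝ᵥ A *ᵥ v := by
  rw [dotProduct_mulVec, ← mulVec_transpose, hA.eq, dotProduct_comm]

variable [DecidableEq n]

noncomputable def toContinuousLinearMap₂' (A : Matrix n n ℝ) :
    (n → ℝ) →L[ℝ] (n → ℝ) →L[ℝ] ℝ :=
  (toLinearMap₂' ℝ A).toContinuousBilinearMap

@[simp]
theorem toContinuousLinearMap₂'_apply (A : Matrix n n ℝ) (u v : n → ℝ) :
    A.toContinuousLinearMap₂' u v = u ⬝ᵥ A *ᵥ v :=
  toLinearMap₂'_apply' A u v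

theorem IsSymm.hasFDerivAt_dotProduct_mulVec_sub {A : Matrix n n ℝ} (hA : A.IsSymm)
    (μ x : n → ℝ) :
    HasFDerivAt (fun y => (y - μ) ⬝ᵥ A *ᵥ (y - μ))
      ((2 : ℝ) • A.toContinuousLinearMap₂' (x - μ)) x := by
  have hsub := (hasFDerivAt_id (𝕜 := ℝ) x).sub_const μ
  simp only [← toContinuousLinearMap₂'_apply]
  refine (A.toContinuousLinearMap₂'.hasFDerivAt_of_bilinear hsub hsub).congr_fderiv ?_
  ext v
  simp [two_smul, hA.dotProduct_mulVec_comm]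

theorem PosDef.eq_zero_of_toContinuousLinearMap₂'_eq_zero {A : Matrix n n ℝ} (hA : A.PosDef)
    {y : n → ℝ} (hy : A.toContinuousLinearMap₂' y = 0) : y = 0 := by
  by_contra hne
  have hpos := hA.dotProduct_mulVec_pos hne
  rw [star_trivial, ← toContinuousLinearMap₂'_apply, hy] at hpos
  exact hpos.false

end Matrix

theorem gauss_pos {D : ℕ} (μ : Fin D → ℝ) {S : Matrix (Fin D) (Fin D) ℝ} (hdet : 0 < S.det)
    (x : Fin D → ℝ) : 0 < gauss D μ S x := by
  unfold gauss
  have := Real.pi_pos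
  positivity

theorem hasFDerivAt_gauss {D : ℕ} (μ : Fin D → ℝ) {S : Matrix (Fin D) (Fin D) ℝ}
    (hS : S.IsSymm) (x : Fin D → ℝ) :
    HasFDerivAt (gauss D μ S) (-gauss D μ S x • S⁻¹.toContinuousLinearMap₂' (x - μ)) x := by
  set c := (Real.sqrt ((2 * Real.pi) ^ D * S.det))⁻¹
  have hg : gauss D μ S =
      fun y => c * Real.exp ((-1 / 2 : ℝ) * ((y - μ) ⬝ᵥ S⁻¹ *ᵥ (y - μ))) := by
    funext y
    simp only [gauss, c, neg_div, neg_mul, one_div, inv_mul_eq_div]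
  have hq := hS.inv.hasFDerivAt_dotProduct_mulVec_sub μ x
  rw [hg]
  refine ((hq.const_mul (-1 / 2 : ℝ)).exp.const_mul c).congr_fderiv ?_
  rw [smul_smul, smul_smul, smul_smul]
  congr 1
  ring

theorem hasFDerivAt_sum_mul_gauss {ι : Type*} [Fintype ι] {D : ℕ} (w : ι → ℝ)
    (μ : ι → Fin D → ℝ) {S : Matrix (Fin D) (Fin D) ℝ} (hS : S.IsSymm) (x : Fin D → ℝ) :
    HasFDerivAt (fun y => ∑ i, w i * gauss D (μ i) S y)
      (-S⁻¹.toContinuousLinearMap₂' (∑ i, (w i * gauss D (μ i) S x) • (x - μ i))) x := by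
  refine (HasFDerivAt.fun_sum fun i _ =>
    (hasFDerivAt_gauss (μ i) hS x).const_mul (w i)).congr_fderiv ?_
  ext v
  simp [mul_assoc]

/-- Equal-covariance case: every critical point of the mixture lies in the
convex hull of the component means. -/
theorem critical_point_mem_convexHull_of_equal_cov
    (D K : ℕ) (w : Fin K → ℝ) (hw : ∀ i, 0 < w i) (hwsum : ∑ i, w i = 1)
    (μ : Fin K → (Fin D → ℝ)) (S : Matrix (Fin D) (Fin D) ℝ) (hS : S.PosDef)
    (xstar : Fin D → ℝ)
    (hcrit : fderiv ℝ (fun x => ∑ i, w i * gauss D (μ i) S x) xstar = 0) :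
    xstar ∈ convexHull ℝ (Set.range μ) := by
  set a : Fin K → ℝ := fun i => w i * gauss D (μ i) S xstar
  have ha : ∀ i, 0 < a i := fun i => mul_pos (hw i) (gauss_pos (μ i) hS.det_pos xstar)
  have hbalance : ∑ i, a i • (xstar - μ i) = 0 := by
    refine hS.inv.eq_zero_of_toContinuousLinearMap₂'_eq_zero (neg_eq_zero.1 ?_)
    rw [← hcrit, (hasFDerivAt_sum_mul_gauss w μ (isHermitian_iff_isSymm.1 hS.1) xstar).fderiv]
  have hsum : 0 < ∑ i, a i :=
    Finset.sum_pos (fun i _ => ha i) (Finset.nonempty_of_sum_ne_zero (hwsum ▸ one_ne_zero))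
  simpa using Finset.mem_convexHull_of_sum_smul_sub_eq_zero (fun i _ => (ha i).le) hsum hbalance
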